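/- Let 𝒪 be a finite nonempty set, P, Q ∈ Δ(𝒪), V : 𝒪 → [0,1], and ξ > 0. For μ ∈ Δ(𝒪) define ψ_μ := sup_{λ>0} { −λ·log E_μ[exp(−V/λ)] − λξ }. Suppose some λ_P > 0 attains the supremum defining ψ_P, and let λ* satisfy 0 < λ* ≤ λ_P. Then ψ_P − ψ_Q ≤ max{ e^ξ/ξ, λ*·e^{1/λ*} } · ‖P − Q‖₁. -/

import Mathlib

/-!
Write `f_μ(λ) = -λ log E_μ[e^{-V/λ}] - λξ`, so that `ψ_μ = sup_{λ>0} f_μ(λ)`. Since `0 ≤ V ≤ 1`,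
`E_μ[e^{-V/λ}] ∈ [e^{-1/λ}, 1]`; hence `-λξ ≤ f_μ(λ) ≤ 1 - λξ`, so `ψ_P ≥ 0` and the maximiser
satisfies `λ_P ≤ 1/ξ`. Comparing `ψ_Q` with `f_Q(λ_P)` and using `log b - log a ≤ (b - a)/a` gives
`ψ_P - ψ_Q ≤ λ_P e^{1/λ_P} ‖P - Q‖₁`. Finally `λ ↦ λ e^{1/λ}` decreases on `(0, 1]` and increases
on `[1, ∞)`, so on `[λ*, 1/ξ]` it is bounded by its values `λ* e^{1/λ*}` and `e^ξ/ξ` at the ends.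
-/

open Real Finset

lemma mul_exp_one_div_eq {x : ℝ} (hx : 0 < x) : x * exp (1 / x) = exp (log x + 1 / x) := by
  rw [exp_add, exp_log hx]

lemma log_sub_log_le_div {a b : ℝ} (ha : 0 < a) (hb : 0 < b) : log b - log a ≤ (b - a) / a := by
  rw [← log_div hb.ne' ha.ne', sub_div, div_self ha.ne']
  exact log_le_sub_one_of_pos (div_pos hb ha)

lemma div_le_log_sub_log {a b : ℝ} (ha : 0 < a) (hb : 0 < b) : (b - a) / b ≤ log b - log a := by
  rw [← log_div hb.ne' ha.ne', sub_div, div_self hb.ne', ← inv_div]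
  exact one_sub_inv_le_log_of_pos (div_pos hb ha)

lemma antitoneOn_mul_exp_one_div : AntitoneOn (fun x : ℝ => x * exp (1 / x)) (Set.Ioc 0 1) := by
  rintro a ⟨ha, -⟩ b ⟨hb, hb1⟩ hab
  simp only [mul_exp_one_div_eq ha, mul_exp_one_div_eq hb, exp_le_exp]
  have hlog := log_sub_log_le_div ha hb
  have hinv : (b - a) / a ≤ 1 / a - 1 / b := by
    rw [div_sub_div _ _ ha.ne' hb.ne', div_le_div_iff₀ ha (mul_pos ha hb)]
    nlinarith [mul_nonneg (mul_nonneg (sub_nonneg.2 hab) ha.le) (sub_nonneg.2 hb1)]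
  linarith

lemma monotoneOn_mul_exp_one_div : MonotoneOn (fun x : ℝ => x * exp (1 / x)) (Set.Ici 1) := by
  rintro a (ha : 1 ≤ a) b (hb : 1 ≤ b) hab
  have ha0 : 0 < a := one_pos.trans_le ha
  have hb0 : 0 < b := one_pos.trans_le hb
  simp only [mul_exp_one_div_eq ha0, mul_exp_one_div_eq hb0, exp_le_exp]
  have hlog := div_le_log_sub_log ha0 hb0
  have hinv : 1 / a - 1 / b ≤ (b - a) / b := by
    rw [div_sub_div _ _ ha0.ne' hb0.ne', div_le_div_iff₀ (mul_pos ha0 hb0) hb0]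
    nlinarith [mul_nonneg (mul_nonneg (sub_nonneg.2 hab) hb0.le) (sub_nonneg.2 ha)]
  linarith

lemma mul_exp_one_div_le_max {a x c : ℝ} (ha : 0 < a) (hax : a ≤ x) (hxc : x ≤ c) :
    x * exp (1 / x) ≤ max (c * exp (1 / c)) (a * exp (1 / a)) := by
  rcases le_or_gt x 1 with hx1 | hx1
  · exact le_max_of_le_right <|
      antitoneOn_mul_exp_one_div ⟨ha, hax.trans hx1⟩ ⟨ha.trans_le hax, hx1⟩ hax
  · exact le_max_of_le_left <|
      monotoneOn_mul_exp_one_div (Set.mem_Ici.2 hx1.le) (Set.mem_Ici.2 (hx1.le.trans hxc)) hxc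

section KLDual

variable {O : Type*} [Fintype O]

lemma abs_sum_mul_sub_sum_mul_le (P Q f : O → ℝ) (hf : ∀ o, |f o| ≤ 1) :
    |∑ o, P o * f o - ∑ o, Q o * f o| ≤ ∑ o, |P o - Q o| := by
  rw [← sum_sub_distrib]
  refine (abs_sum_le_sum_abs _ _).trans (sum_le_sum fun o _ => ?_)
  rw [← sub_mul, abs_mul]
  exact mul_le_of_le_one_right (abs_nonneg _) (hf o)

lemma exp_neg_one_div_le_sum_mul_exp {μ V : O → ℝ} (hμ0 : ∀ o, 0 ≤ μ o) (hμ1 : ∑ o, μ o = 1)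
    (hV1 : ∀ o, V o ≤ 1) {lam : ℝ} (hlam : 0 < lam) :
    exp (-(1 / lam)) ≤ ∑ o, μ o * exp (-V o / lam) :=
  calc exp (-(1 / lam)) = ∑ o, μ o * exp (-(1 / lam)) := by rw [← sum_mul, hμ1, one_mul]
    _ ≤ ∑ o, μ o * exp (-V o / lam) := sum_le_sum fun o _ => by
        rw [neg_div]
        gcongr
        · exact hμ0 o
        · exact hV1 o

lemma sum_mul_exp_le_one {μ V : O → ℝ} (hμ0 : ∀ o, 0 ≤ μ o) (hμ1 : ∑ o, μ o = 1)
    (hV0 : ∀ o, 0 ≤ V o) {lam : ℝ} (hlam : 0 ≤ lam) :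
    ∑ o, μ o * exp (-V o / lam) ≤ 1 :=
  calc ∑ o, μ o * exp (-V o / lam) ≤ ∑ o, μ o := sum_le_sum fun o _ =>
        mul_le_of_le_one_right (hμ0 o)
          (exp_le_one_iff.2 (div_nonpos_of_nonpos_of_nonneg (neg_nonpos.2 (hV0 o)) hlam))
    _ = 1 := hμ1

/-- The dual objective of the KL-constrained robust expectation
`inf {E_q[V] | KL(q ‖ μ) ≤ ξ}`. -/
noncomputable def klDual (μ V : O → ℝ) (ξ lam : ℝ) : ℝ :=
  -lam * log (∑ o, μ o * exp (-V o / lam)) - lam * ξ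

def klDualValues (μ V : O → ℝ) (ξ : ℝ) : Set ℝ :=
  {w | ∃ lam : ℝ, 0 < lam ∧ w = klDual μ V ξ lam}

lemma klDual_le {μ V : O → ℝ} (hμ0 : ∀ o, 0 ≤ μ o) (hμ1 : ∑ o, μ o = 1) (hV1 : ∀ o, V o ≤ 1)
    (ξ : ℝ) {lam : ℝ} (hlam : 0 < lam) : klDual μ V ξ lam ≤ 1 - lam * ξ := by
  have hE := exp_neg_one_div_le_sum_mul_exp hμ0 hμ1 hV1 hlam
  have hlog : -(1 / lam) ≤ log (∑ o, μ o * exp (-V o / lam)) :=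
    (le_log_iff_exp_le ((exp_pos _).trans_le hE)).2 hE
  have h := mul_le_mul_of_nonneg_left hlog hlam.le
  rw [mul_neg, mul_one_div_cancel hlam.ne'] at h
  unfold klDual
  linarith

lemma neg_mul_le_klDual {μ V : O → ℝ} (hμ0 : ∀ o, 0 ≤ μ o) (hμ1 : ∑ o, μ o = 1)
    (hV0 : ∀ o, 0 ≤ V o) (ξ : ℝ) {lam : ℝ} (hlam : 0 ≤ lam) : -(lam * ξ) ≤ klDual μ V ξ lam := by
  have hlog : log (∑ o, μ o * exp (-V o / lam)) ≤ 0 :=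
    log_nonpos (sum_nonneg fun o _ => mul_nonneg (hμ0 o) (exp_pos _).le)
      (sum_mul_exp_le_one hμ0 hμ1 hV0 hlam)
  unfold klDual
  nlinarith

lemma bddAbove_klDualValues {μ V : O → ℝ} (hμ0 : ∀ o, 0 ≤ μ o) (hμ1 : ∑ o, μ o = 1)
    (hV1 : ∀ o, V o ≤ 1) {ξ : ℝ} (hξ : 0 ≤ ξ) : BddAbove (klDualValues μ V ξ) := by
  refine ⟨1, ?_⟩
  rintro w ⟨lam, hlam, rfl⟩
  have := klDual_le hμ0 hμ1 hV1 ξ hlam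
  nlinarith

lemma nonneg_of_isGreatest_klDualValues {μ V : O → ℝ} (hμ0 : ∀ o, 0 ≤ μ o)
    (hμ1 : ∑ o, μ o = 1) (hV0 : ∀ o, 0 ≤ V o) {ξ w : ℝ} (hξ : 0 < ξ)
    (hw : IsGreatest (klDualValues μ V ξ) w) : 0 ≤ w := by
  refine le_of_forall_pos_le_add fun ε hε => ?_
  have hlam : 0 < ε / ξ := div_pos hε hξ
  have := neg_mul_le_klDual hμ0 hμ1 hV0 ξ hlam.le
  rw [div_mul_cancel₀ ε hξ.ne'] at this
  linarith [hw.2 ⟨ε / ξ, hlam, rfl⟩]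

lemma le_one_div_of_isGreatest_klDualValues {μ V : O → ℝ} (hμ0 : ∀ o, 0 ≤ μ o)
    (hμ1 : ∑ o, μ o = 1) (hV0 : ∀ o, 0 ≤ V o) (hV1 : ∀ o, V o ≤ 1) {ξ lam : ℝ} (hξ : 0 < ξ)
    (hlam : 0 < lam) (h : IsGreatest (klDualValues μ V ξ) (klDual μ V ξ lam)) : lam ≤ 1 / ξ := by
  have h0 := nonneg_of_isGreatest_klDualValues hμ0 hμ1 hV0 hξ h
  have h1 := klDual_le hμ0 hμ1 hV1 ξ hlam
  rw [le_div_iff₀ hξ]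
  linarith

lemma klDual_sub_klDual_le {P Q V : O → ℝ} (hP0 : ∀ o, 0 ≤ P o) (hP1 : ∑ o, P o = 1)
    (hQ0 : ∀ o, 0 ≤ Q o) (hQ1 : ∑ o, Q o = 1) (hV0 : ∀ o, 0 ≤ V o) (hV1 : ∀ o, V o ≤ 1)
    (ξ : ℝ) {lam : ℝ} (hlam : 0 < lam) :
    klDual P V ξ lam - klDual Q V ξ lam ≤ lam * exp (1 / lam) * ∑ o, |P o - Q o| := by
  set A := ∑ o, P o * exp (-V o / lam)
  set B := ∑ o, Q o * exp (-V o / lam)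
  have hA : exp (-(1 / lam)) ≤ A := exp_neg_one_div_le_sum_mul_exp hP0 hP1 hV1 hlam
  have hA0 : 0 < A := (exp_pos _).trans_le hA
  have hB0 : 0 < B := (exp_pos _).trans_le (exp_neg_one_div_le_sum_mul_exp hQ0 hQ1 hV1 hlam)
  have hinvA : A⁻¹ ≤ exp (1 / lam) := by
    rw [← neg_neg (1 / lam), exp_neg]
    exact inv_anti₀ (exp_pos _) hA
  have hBA : |B - A| ≤ ∑ o, |P o - Q o| := by
    rw [abs_sub_comm]
    refine abs_sum_mul_sub_sum_mul_le P Q _ fun o => ?_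
    rw [abs_of_pos (exp_pos _)]
    exact exp_le_one_iff.2 (div_nonpos_of_nonpos_of_nonneg (neg_nonpos.2 (hV0 o)) hlam.le)
  calc klDual P V ξ lam - klDual Q V ξ lam = lam * (log B - log A) := by unfold klDual; ring
    _ ≤ lam * (|B - A| * A⁻¹) := by
        gcongr
        exact (log_sub_log_le_div hA0 hB0).trans (div_le_div_of_nonneg_right (le_abs_self _) hA0.le)
    _ ≤ lam * exp (1 / lam) * ∑ o, |P o - Q o| := by
        rw [mul_assoc, mul_comm (exp _)]
        gcongr

end KLDual

theorem stmt16_general {O : Type*} [Fintype O]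
    (P Q : O → ℝ) (hP0 : ∀ o, 0 ≤ P o) (hP1 : ∑ o, P o = 1)
    (hQ0 : ∀ o, 0 ≤ Q o) (hQ1 : ∑ o, Q o = 1)
    (V : O → ℝ) (hV : ∀ o, 0 ≤ V o ∧ V o ≤ 1)
    (ξ : ℝ) (hξ : 0 < ξ)
    (lamP lamstar : ℝ) (hlamP : 0 < lamP) (hlamstar : 0 < lamstar) (hle : lamstar ≤ lamP)
    (hatt : IsGreatest
      {w : ℝ | ∃ lam : ℝ, 0 < lam ∧
        w = -lam * Real.log (∑ o, P o * Real.exp (-V o / lam)) - lam * ξ}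
      (-lamP * Real.log (∑ o, P o * Real.exp (-V o / lamP)) - lamP * ξ)) :
    sSup {w : ℝ | ∃ lam : ℝ, 0 < lam ∧
        w = -lam * Real.log (∑ o, P o * Real.exp (-V o / lam)) - lam * ξ}
      - sSup {w : ℝ | ∃ lam : ℝ, 0 < lam ∧
        w = -lam * Real.log (∑ o, Q o * Real.exp (-V o / lam)) - lam * ξ}
      ≤ max (Real.exp ξ / ξ) (lamstar * Real.exp (1 / lamstar)) * ∑ o, |P o - Q o| := by
  have hV0 : ∀ o, 0 ≤ V o := fun o => (hV o).1
  have hV1 : ∀ o, V o ≤ 1 := fun o => (hV o).2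
  change IsGreatest (klDualValues P V ξ) (klDual P V ξ lamP) at hatt
  change sSup (klDualValues P V ξ) - sSup (klDualValues Q V ξ) ≤ _
  have hψQ : klDual Q V ξ lamP ≤ sSup (klDualValues Q V ξ) :=
    le_csSup (bddAbove_klDualValues hQ0 hQ1 hV1 hξ.le) ⟨lamP, hlamP, rfl⟩
  have hlamP_le := le_one_div_of_isGreatest_klDualValues hP0 hP1 hV0 hV1 hξ hlamP hatt
  have hgrowth : lamP * exp (1 / lamP) ≤ max (exp ξ / ξ) (lamstar * exp (1 / lamstar)) := by
    have := mul_exp_one_div_le_max hlamstar hle hlamP_le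
    rwa [one_div_one_div, one_div_mul_eq_div] at this
  rw [hatt.csSup_eq]
  calc klDual P V ξ lamP - sSup (klDualValues Q V ξ) ≤ klDual P V ξ lamP - klDual Q V ξ lamP := by
        linarith
    _ ≤ lamP * exp (1 / lamP) * ∑ o, |P o - Q o| :=
        klDual_sub_klDual_le hP0 hP1 hQ0 hQ1 hV0 hV1 ξ hlamP
    _ ≤ _ := mul_le_mul_of_nonneg_right hgrowth (sum_nonneg fun o _ => abs_nonneg _)

theorem stmt16 {O : Type*} [Fintype O] [Nonempty O]
    (P Q : O → ℝ) (hP0 : ∀ o, 0 ≤ P o) (hP1 : ∑ o, P o = 1)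
    (hQ0 : ∀ o, 0 ≤ Q o) (hQ1 : ∑ o, Q o = 1)
    (V : O → ℝ) (hV : ∀ o, 0 ≤ V o ∧ V o ≤ 1)
    (ξ : ℝ) (hξ : 0 < ξ)
    (lamP lamstar : ℝ) (hlamP : 0 < lamP) (hlamstar : 0 < lamstar) (hle : lamstar ≤ lamP)
    (hatt : IsGreatest
      {w : ℝ | ∃ lam : ℝ, 0 < lam ∧
        w = -lam * Real.log (∑ o, P o * Real.exp (-V o / lam)) - lam * ξ}
      (-lamP * Real.log (∑ o, P o * Real.exp (-V o / lamP)) - lamP * ξ)) :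
    sSup {w : ℝ | ∃ lam : ℝ, 0 < lam ∧
        w = -lam * Real.log (∑ o, P o * Real.exp (-V o / lam)) - lam * ξ}
      - sSup {w : ℝ | ∃ lam : ℝ, 0 < lam ∧
        w = -lam * Real.log (∑ o, Q o * Real.exp (-V o / lam)) - lam * ξ}
      ≤ max (Real.exp ξ / ξ) (lamstar * Real.exp (1 / lamstar)) * ∑ o, |P o - Q o| :=
  stmt16_general P Q hP0 hP1 hQ0 hQ1 V hV ξ hξ lamP lamstar hlamP hlamstar hle hatt
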